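/- Let A ∈ ℝ^{n×m} and let U = [U₁ U₂] be orthogonal with U₁ ∈ ℝ^{m×k}. Let J be an index set of ℓ ≥ k column indices such that U₁(J,:) (the rows of U₁ indexed by J) has full column rank. Then ‖A − A(:,J)A(:,J)†A‖ ≤ ‖U₁(J,:)†‖ · ‖A U₂ U₂(J,:)ᵀ‖ + ‖A U₂‖ in the spectral norm. -/

import Mathlib

open Matrix

noncomputable def specNorm {m n : Type*} [Fintype m] [Fintype n] [DecidableEq n]
    (A : Matrix m n ℝ) : ℝ :=
  ‖LinearMap.toContinuousLinearMap (Matrix.toEuclideanLin A)‖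

noncomputable def sMin {m n : Type*} [Fintype m] [Fintype n] [DecidableEq n]
    (A : Matrix m n ℝ) : ℝ :=
  Real.sqrt (⨅ i, (show (Aᵀ * A).IsHermitian by simpa using Matrix.isHermitian_conjTranspose_mul_self A).eigenvalues i)

noncomputable def singVals {m n : ℕ} (A : Matrix (Fin m) (Fin n) ℝ) : Fin n → ℝ :=
  fun i =>
    Real.sqrt ((show (Aᵀ * A).IsHermitian by simpa using Matrix.isHermitian_conjTranspose_mul_self A).eigenvalues
      (Tuple.sort (show (Aᵀ * A).IsHermitian by simpa using Matrix.isHermitian_conjTranspose_mul_self A).eigenvalues i.rev))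

noncomputable def pinv {m n : Type*} [Fintype m] [Fintype n] (A : Matrix m n ℝ) : Matrix n m ℝ :=
  open Classical in
  if h : ∃ B : Matrix n m ℝ,
      A * B * A = A ∧ B * A * B = B ∧ (A * B)ᵀ = A * B ∧ (B * A)ᵀ = B * A
  then h.choose else 0

/-!
With `Q = 1 - A(:,J) A(:,J)†`, an orthogonal projection annihilating `A(:,J)`, the residual is
`Q A`. Since `U₁U₁ᵀ + U₂U₂ᵀ = 1`, restricting `A = A U₁U₁ᵀ + A U₂U₂ᵀ` to the columns `J` gives
`A(:,J) = A U₁ U₁(J,:)ᵀ + A U₂ U₂(J,:)ᵀ`; by the rank condition `U₁(J,:)†` is a left inverse of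
`U₁(J,:)`, so this can be solved for `A U₁`, giving
`Q A = -Q (A U₂ U₂(J,:)ᵀ) U₁(J,:)†ᵀ U₁ᵀ + Q A U₂ U₂ᵀ`, where `Q`, `U₁ᵀ`, `U₂ᵀ` are contractions.
The pseudoinverse exists as `(AᵀA)⁺ Aᵀ`, with `(AᵀA)⁺` the functional calculus of `x ↦ x⁻¹`.
-/

open scoped Matrix.Norms.L2Operator MatrixOrder

section MoorePenrose

variable {m n : Type*} [Fintype m] [Fintype n]

def IsMoorePenroseInverse (A : Matrix m n ℝ) (B : Matrix n m ℝ) : Prop :=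
  A * B * A = A ∧ B * A * B = B ∧ (A * B)ᵀ = A * B ∧ (B * A)ᵀ = B * A

-- On the finite spectrum every function is continuous, and `x * x⁻¹ * x = x` holds also at `0`.
theorem IsSelfAdjoint.isMoorePenroseInverse_cfc_inv [DecidableEq n] {M : Matrix n n ℝ}
    (hM : IsSelfAdjoint M) : IsMoorePenroseInverse M (cfc (·⁻¹ : ℝ → ℝ) M) := by
  set N := cfc (·⁻¹ : ℝ → ℝ) M
  have hcfc (f g : ℝ → ℝ) : cfc f M * cfc g M = cfc (fun x => f x * g x) M :=
    (cfc_mul f g M (M.finite_real_spectrum.continuousOn f)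
      (M.finite_real_spectrum.continuousOn g)).symm
  have hid : cfc (fun x => x) M = M := cfc_id' ℝ M
  have hNM : N * M = cfc (fun x : ℝ => x⁻¹ * x) M := by rw [← hcfc, hid]
  have hMN : M * N = cfc (fun x : ℝ => x * x⁻¹) M := by rw [← hcfc, hid]
  refine ⟨?_, ?_, ?_, ?_⟩
  · calc M * N * M = cfc (fun x : ℝ => x * x⁻¹ * x) M := by rw [← hcfc, ← hcfc, hid]
      _ = M := by simpa only [mul_inv_mul_cancel] using hid
  · calc N * M * N = cfc (fun x : ℝ => x⁻¹ * x * x⁻¹) M := by rw [← hcfc, ← hcfc, hid]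
      _ = N := by congr 1; funext x; simpa using mul_inv_mul_cancel x⁻¹
  · rw [hMN]; exact (cfc_predicate _ M : IsSelfAdjoint _).star_eq
  · rw [hNM]; exact (cfc_predicate _ M : IsSelfAdjoint _).star_eq

theorem exists_isMoorePenroseInverse (A : Matrix m n ℝ) : ∃ B, IsMoorePenroseInverse A B := by
  classical
  have hM : IsSelfAdjoint (Aᵀ * A) := isHermitian_conjTranspose_mul_self A
  obtain ⟨hMNM, hNMN, -, hNM⟩ := hM.isMoorePenroseInverse_cfc_inv
  set N := cfc (·⁻¹ : ℝ → ℝ) (Aᵀ * A)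
  have hN : Nᵀ = N := (cfc_predicate _ _ : IsSelfAdjoint N).star_eq
  have hANM : A * (N * (Aᵀ * A)) = A := by
    have h : Aᴴ * A * (N * (Aᵀ * A) - 1) = 0 := by
      rw [conjTranspose_eq_transpose_of_trivial, Matrix.mul_sub, ← Matrix.mul_assoc, hMNM,
        Matrix.mul_one, sub_self]
    rwa [conjTranspose_mul_self_mul_eq_zero, Matrix.mul_sub, Matrix.mul_one, sub_eq_zero] at h
  refine ⟨N * Aᵀ, ?_, ?_, ?_, ?_⟩
  · simpa only [Matrix.mul_assoc] using hANM
  · simpa only [Matrix.mul_assoc] using congrArg (· * Aᵀ) hNMN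
  · simp only [transpose_mul, transpose_transpose, hN, Matrix.mul_assoc]
  · simpa only [Matrix.mul_assoc] using hNM

theorem isMoorePenroseInverse_pinv (A : Matrix m n ℝ) : IsMoorePenroseInverse A (pinv A) := by
  have h : ∃ B : Matrix n m ℝ,
      A * B * A = A ∧ B * A * B = B ∧ (A * B)ᵀ = A * B ∧ (B * A)ᵀ = B * A :=
    exists_isMoorePenroseInverse A
  rw [pinv, dif_pos h]
  exact h.choose_spec

theorem IsMoorePenroseInverse.isStarProjection_mul {A : Matrix m n ℝ} {B : Matrix n m ℝ}
    (h : IsMoorePenroseInverse A B) : IsStarProjection (A * B) where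
  isIdempotentElem := by
    rw [IsIdempotentElem, ← Matrix.mul_assoc, h.1]
  isSelfAdjoint := h.2.2.1

theorem IsMoorePenroseInverse.one_sub_mul_mul_self [DecidableEq m] {A : Matrix m n ℝ}
    {B : Matrix n m ℝ} (h : IsMoorePenroseInverse A B) : (1 - A * B) * A = 0 := by
  rw [Matrix.sub_mul, Matrix.one_mul, h.1, sub_self]

theorem pinv_mul_self_of_rank_eq_card [DecidableEq n] {A : Matrix m n ℝ}
    (h : A.rank = Fintype.card n) : pinv A * A = 1 := by
  have hinj : Function.Injective A.mulVec :=
    mulVec_injective_iff.mpr <| linearIndependent_iff_card_eq_finrank_span.mpr <| by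
      rw [Set.finrank, ← rank_eq_finrank_span_cols, h]
  refine ext_iff_mulVec.mpr fun v => hinj ?_
  rw [mulVec_mulVec, ← Matrix.mul_assoc, (isMoorePenroseInverse_pinv A).1, one_mulVec]

end MoorePenrose

section L2OpNorm

variable {n m k k' l p : Type*}

theorem l2_opNorm_transpose [Fintype m] [Fintype n] [DecidableEq m] [DecidableEq n]
    (A : Matrix m n ℝ) : ‖Aᵀ‖ = ‖A‖ :=
  l2_opNorm_conjTranspose A

theorem l2_opNorm_le_one_of_nonneg_of_le_one [Fintype n] [DecidableEq n] {M : Matrix n n ℝ}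
    (h0 : 0 ≤ M) (h1 : M ≤ 1) : ‖M‖ ≤ 1 := by
  have : IsSelfAdjoint M := .of_nonneg h0
  rw [← cfc_id' ℝ M]
  refine norm_cfc_le zero_le_one fun x hx => ?_
  have hx1 : x ≤ 1 := (le_algebraMap_iff_spectrum_le (r := (1 : ℝ))).mp (by simpa using h1) x hx
  rwa [Real.norm_eq_abs, abs_of_nonneg (spectrum_nonneg_of_nonneg h0 hx)]

theorem l2_opNorm_transpose_le_one_of_mul_transpose_add_eq_one [Fintype m] [Fintype k]
    [Fintype k'] [DecidableEq m] {U : Matrix m k ℝ} {V : Matrix m k' ℝ}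
    (h : U * Uᵀ + V * Vᵀ = 1) : ‖Uᵀ‖ ≤ 1 := by
  have hle : U * Uᵀ ≤ 1 :=
    h ▸ le_add_of_nonneg_right (posSemidef_self_mul_conjTranspose V).nonneg
  have hsq : ‖Uᵀ‖ * ‖Uᵀ‖ ≤ 1 := by
    rw [← l2_opNorm_conjTranspose_mul_self, conjTranspose_eq_transpose_of_trivial,
      transpose_transpose]
    exact l2_opNorm_le_one_of_nonneg_of_le_one (posSemidef_self_mul_conjTranspose U).nonneg hle
  nlinarith [norm_nonneg Uᵀ]

theorem submatrix_id_eq_add_of_mul_transpose_add_eq_one [Fintype m] [Fintype k] [Fintype k']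
    [DecidableEq m] (A : Matrix n m ℝ) {U₁ : Matrix m k ℝ} {U₂ : Matrix m k' ℝ}
    (hU : U₁ * U₁ᵀ + U₂ * U₂ᵀ = 1) (J : l → m) :
    A.submatrix id J = A * U₁ * (U₁.submatrix J id)ᵀ + A * U₂ * (U₂.submatrix J id)ᵀ := by
  calc A.submatrix id J = (A * (U₁ * U₁ᵀ + U₂ * U₂ᵀ)).submatrix id J := by rw [hU, Matrix.mul_one]
    _ = _ := by simp only [Matrix.mul_add, Matrix.mul_assoc]; rfl

theorem mul_eq_of_mul_submatrix_eq_zero [Fintype n] [Fintype m] [Fintype k] [Fintype k']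
    [Fintype l] [DecidableEq m] [DecidableEq k] {Q : Matrix p n ℝ} {A : Matrix n m ℝ}
    {U₁ : Matrix m k ℝ} {U₂ : Matrix m k' ℝ} {J : l → m} {B : Matrix k l ℝ}
    (hU : U₁ * U₁ᵀ + U₂ * U₂ᵀ = 1) (hQ : Q * A.submatrix id J = 0)
    (hB : B * U₁.submatrix J id = 1) :
    Q * A = -(Q * (A * U₂ * (U₂.submatrix J id)ᵀ) * Bᵀ * U₁ᵀ) + Q * (A * U₂) * U₂ᵀ := by
  set X := A * U₂ * (U₂.submatrix J id)ᵀ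
  have hAU₁ : A * U₁ = (A.submatrix id J - X) * Bᵀ := by
    rw [submatrix_id_eq_add_of_mul_transpose_add_eq_one A hU J, add_sub_cancel_right,
      Matrix.mul_assoc, ← transpose_mul, hB, transpose_one, Matrix.mul_one]
  calc Q * A = Q * (A * U₁) * U₁ᵀ + Q * (A * U₂) * U₂ᵀ := by
        rw [← Matrix.mul_one (Q * A), ← hU]; simp only [Matrix.mul_add, Matrix.mul_assoc]
    _ = _ := by
        rw [hAU₁, Matrix.sub_mul, Matrix.mul_sub, ← Matrix.mul_assoc Q, hQ]
        simp only [Matrix.zero_mul, zero_sub, Matrix.neg_mul, Matrix.mul_assoc]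

theorem l2_opNorm_mul_le_of_mul_submatrix_eq_zero [Fintype n] [Fintype m] [Fintype k]
    [Fintype k'] [Fintype l] [Fintype p] [DecidableEq n] [DecidableEq m] [DecidableEq k]
    [DecidableEq k'] [DecidableEq l] {Q : Matrix p n ℝ} {A : Matrix n m ℝ} {U₁ : Matrix m k ℝ}
    {U₂ : Matrix m k' ℝ} {J : l → m} {B : Matrix k l ℝ} (hU : U₁ * U₁ᵀ + U₂ * U₂ᵀ = 1)
    (hQ : ‖Q‖ ≤ 1) (hQA : Q * A.submatrix id J = 0) (hB : B * U₁.submatrix J id = 1) :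
    ‖Q * A‖ ≤ ‖B‖ * ‖A * U₂ * (U₂.submatrix J id)ᵀ‖ + ‖A * U₂‖ := by
  set X := A * U₂ * (U₂.submatrix J id)ᵀ
  have hU₁ := l2_opNorm_transpose_le_one_of_mul_transpose_add_eq_one hU
  have hU₂ := l2_opNorm_transpose_le_one_of_mul_transpose_add_eq_one ((add_comm _ _).trans hU)
  calc ‖Q * A‖ ≤ ‖Q * X * Bᵀ * U₁ᵀ‖ + ‖Q * (A * U₂) * U₂ᵀ‖ := by
        rw [mul_eq_of_mul_submatrix_eq_zero hU hQA hB, ← norm_neg (Q * X * Bᵀ * U₁ᵀ)]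
        exact norm_add_le _ _
    _ ≤ ‖Q‖ * ‖X‖ * ‖Bᵀ‖ * ‖U₁ᵀ‖ + ‖Q‖ * ‖A * U₂‖ * ‖U₂ᵀ‖ := by
        gcongr
        · refine (l2_opNorm_mul _ _).trans ?_
          gcongr
          refine (l2_opNorm_mul _ _).trans ?_
          gcongr
          exact l2_opNorm_mul _ _
        · refine (l2_opNorm_mul _ _).trans ?_
          gcongr
          exact l2_opNorm_mul _ _
    _ ≤ 1 * ‖X‖ * ‖B‖ * 1 + 1 * ‖A * U₂‖ * 1 := by
        rw [l2_opNorm_transpose]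
        gcongr
    _ = ‖B‖ * ‖X‖ + ‖A * U₂‖ := by ring

end L2OpNorm

theorem chiu_column_projection_bound_general {n m k k2 l : ℕ} (A : Matrix (Fin n) (Fin m) ℝ)
    (U1 : Matrix (Fin m) (Fin k) ℝ) (U2 : Matrix (Fin m) (Fin k2) ℝ)
    (horth2 : Matrix.fromCols U1 U2 * (Matrix.fromCols U1 U2)ᵀ = 1)
    (J : Fin l ↪ Fin m) (hJrank : (U1.submatrix J id).rank = k) :
    specNorm (A - A.submatrix id J * pinv (A.submatrix id J) * A) ≤
      specNorm (pinv (U1.submatrix J id)) * specNorm (A * U2 * (U2.submatrix J id)ᵀ) +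
        specNorm (A * U2) := by
  have hU : U1 * U1ᵀ + U2 * U2ᵀ = 1 := by
    rwa [transpose_fromCols, fromCols_mul_fromRows] at horth2
  have hP := isMoorePenroseInverse_pinv (A.submatrix id J)
  have h := l2_opNorm_mul_le_of_mul_submatrix_eq_zero hU hP.isStarProjection_mul.one_sub.norm_le
    hP.one_sub_mul_mul_self (pinv_mul_self_of_rank_eq_card (by simpa using hJrank))
  rwa [Matrix.sub_mul, Matrix.one_mul] at h

theorem chiu_column_projection_bound {n m k k2 l : ℕ} (A : Matrix (Fin n) (Fin m) ℝ)
    (U1 : Matrix (Fin m) (Fin k) ℝ) (U2 : Matrix (Fin m) (Fin k2) ℝ)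
    (horth1 : (Matrix.fromCols U1 U2)ᵀ * Matrix.fromCols U1 U2 = 1)
    (horth2 : Matrix.fromCols U1 U2 * (Matrix.fromCols U1 U2)ᵀ = 1)
    (J : Fin l ↪ Fin m) (hl : k ≤ l) (hJrank : (U1.submatrix J id).rank = k) :
    specNorm (A - A.submatrix id J * pinv (A.submatrix id J) * A) ≤
      specNorm (pinv (U1.submatrix J id)) * specNorm (A * U2 * (U2.submatrix J id)ᵀ) +
        specNorm (A * U2) :=
  chiu_column_projection_bound_general A U1 U2 horth2 J hJrank
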